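/- The set of unital completely positive maps on M_n(ℂ) equals the set of all operational convex combinations of automorphisms of M_n(ℂ): every ucp map Φ can be written as Φ(x) = ∑ a_i (u_i x u_i*) a_i* with unitaries u_i and {a_i} a finite operational partition of unity, and conversely every such map is ucp. -/

import Mathlib

open Matrix ComplexOrder

/-- The algebra of `n × n` complex matrices. -/
abbrev Mat (n : ℕ) := Matrix (Fin n) (Fin n) ℂ

/-- The map `Ad v : x ↦ v x v*` as a linear map. -/
noncomputable def adL {n : ℕ} (v : Mat n) : Mat n →ₗ[ℂ] Mat n where
  toFun x := v * x * star v
  map_add' x y := by simp [Matrix.mul_add, Matrix.add_mul]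
  map_smul' c x := by simp [Matrix.mul_smul, Matrix.smul_mul]

/-- A positive map sends positive semidefinite matrices to positive semidefinite matrices. -/
def IsPosMap (n : ℕ) (Φ : Mat n →ₗ[ℂ] Mat n) : Prop :=
  ∀ A : Mat n, A.PosSemidef → (Φ A).PosSemidef

/-- `Φ` is completely positive: `Φ ⊗ id_k` is positive for every `k`, where a block matrix
in `M_n ⊗ M_k` is applied `Φ` blockwise. -/
def IsCompletelyPositive (n : ℕ) (Φ : Mat n →ₗ[ℂ] Mat n) : Prop :=
  ∀ k : ℕ, ∀ A : Matrix (Fin n × Fin k) (Fin n × Fin k) ℂ, A.PosSemidef →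
    (Matrix.of fun p q : Fin n × Fin k =>
      (Φ (Matrix.of fun i j => A (i, p.2) (j, q.2))) p.1 q.1).PosSemidef

/-- Unital completely positive map. -/
def IsUCP (n : ℕ) (Φ : Mat n →ₗ[ℂ] Mat n) : Prop :=
  Φ 1 = 1 ∧ IsCompletelyPositive n Φ

/-- A finite operational partition of unity: nonzero matrices with `∑ vᵢ vᵢ* = 1`. -/
def IsFOP {n m : ℕ} (v : Fin m → Mat n) : Prop :=
  (∀ i, v i ≠ 0) ∧ ∑ i, v i * star (v i) = 1

/-!
By Choi's theorem, a completely positive `Φ` has a positive semidefinite Choi matrix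
`C = (Φ(E_ab)_ij)`; factoring `C = B B*` and reading the columns of `B` as `n × n` matrices `w_r`
gives a Kraus form `Φ = ∑ Ad w_r`. Discarding the zero `w_r`, unitality of `Φ` says exactly that
they form an operational partition of unity, and trivial unitaries `u_i = 1` then suffice.
Conversely `x ↦ a u x u* a*` is `Ad (a u)`, and `Ad v` is completely positive because applying it
blockwise is conjugation by `v ⊗ 1`.
-/

open scoped MatrixOrder in
theorem Matrix.PosSemidef.exists_eq_mul_conjTranspose {𝕜 N : Type*} [RCLike 𝕜] [Fintype N]
    [DecidableEq N] {C : Matrix N N 𝕜} (hC : C.PosSemidef) : ∃ B : Matrix N N 𝕜, C = B * Bᴴ :=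
  ⟨CFC.sqrt C, by rw [(CFC.sqrt_nonneg C).posSemidef.1.eq, CFC.sqrt_mul_sqrt_self C hC.nonneg]⟩

theorem exists_fin_ne_zero_sum_comp_eq {ι α M : Type*} [Fintype ι] [Zero α] [AddCommMonoid M]
    (w : ι → α) (g : α → M) (hg : g 0 = 0) :
    ∃ (m : ℕ) (a : Fin m → α), (∀ i, a i ≠ 0) ∧ ∑ i, g (a i) = ∑ r, g (w r) := by
  classical
  set s := Finset.univ.filter fun r => w r ≠ 0
  refine ⟨s.card, fun i => w (s.equivFin.symm i),
    fun i => (Finset.mem_filter.mp (s.equivFin.symm i).2).2, ?_⟩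
  rw [Equiv.sum_comp s.equivFin.symm (fun r => g (w r)), Finset.sum_coe_sort s (fun r => g (w r))]
  exact Finset.sum_filter_of_ne fun r _ h hr => h (by rw [hr, hg])

section
variable {n : ℕ}

theorem adL_apply (v x : Mat n) : adL v x = v * x * star v := rfl

theorem adL_zero : adL (0 : Mat n) = 0 := by
  ext x : 1
  simp [adL_apply]

theorem IsCompletelyPositive.zero : IsCompletelyPositive n 0 := by
  intro k A _
  exact Matrix.PosSemidef.zero

theorem IsCompletelyPositive.add {Φ Ψ : Mat n →ₗ[ℂ] Mat n} (hΦ : IsCompletelyPositive n Φ)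
    (hΨ : IsCompletelyPositive n Ψ) : IsCompletelyPositive n (Φ + Ψ) := by
  intro k A hA
  convert (hΦ k A hA).add (hΨ k A hA) using 1
  ext p q
  simp

theorem IsCompletelyPositive.sum {ι : Type*} (s : Finset ι) {Φ : ι → Mat n →ₗ[ℂ] Mat n}
    (h : ∀ i ∈ s, IsCompletelyPositive n (Φ i)) : IsCompletelyPositive n (∑ i ∈ s, Φ i) :=
  Finset.sum_induction Φ _ (fun _ _ => .add) .zero h

open scoped Kronecker in
theorem isCompletelyPositive_adL (v : Mat n) : IsCompletelyPositive n (adL v) := by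
  intro k A hA
  convert hA.mul_mul_conjTranspose_same (v ⊗ₖ (1 : Matrix (Fin k) (Fin k) ℂ)) using 1
  ext p q
  simp only [of_apply, adL_apply, mul_apply, conjTranspose_apply, kroneckerMap_apply,
    Fintype.sum_prod_type, star_eq_conjTranspose, one_apply]
  simp [mul_ite, ite_mul, Finset.mul_sum, mul_comm, mul_left_comm, mul_assoc,
    apply_ite (starRingEnd ℂ), Finset.sum_ite_eq]

theorem isCompletelyPositive_sum_adL {ι : Type*} [Fintype ι] (w : ι → Mat n) :
    IsCompletelyPositive n (∑ i, adL (w i)) :=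
  .sum _ fun i _ => isCompletelyPositive_adL (w i)

def choiMatrix (Φ : Mat n →ₗ[ℂ] Mat n) : Matrix (Fin n × Fin n) (Fin n × Fin n) ℂ :=
  of fun p q => Φ (single p.2 q.2 1) p.1 q.1

theorem choiMatrix_injective : Function.Injective (choiMatrix (n := n)) := by
  intro Φ Ψ h
  refine Matrix.ext_linearMap ℂ fun a b => LinearMap.ext_ring (Matrix.ext fun c d => ?_)
  exact congr_fun₂ h (c, a) (d, b)

theorem choiMatrix_sum_adL {ι : Type*} [Fintype ι] (w : ι → Mat n) :
    choiMatrix (∑ i, adL (w i)) =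
      (of fun p i => w i p.1 p.2) * (of fun p i => w i p.1 p.2)ᴴ := by
  ext p q
  simp only [choiMatrix, of_apply, LinearMap.coe_sum, Finset.sum_apply, Matrix.sum_apply,
    adL_apply, mul_apply, conjTranspose_apply, star_eq_conjTranspose, single_apply]
  simp [ite_and, ite_mul, mul_ite, Finset.sum_ite_eq]

theorem IsCompletelyPositive.posSemidef_choiMatrix {Φ : Mat n →ₗ[ℂ] Mat n}
    (h : IsCompletelyPositive n Φ) : (choiMatrix Φ).PosSemidef := by
  -- `ω` is the unnormalised maximally entangled vector: the blocks of `ω ω*` are the matrix units.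
  let ω : Fin n × Fin n → ℂ := fun p => if p.1 = p.2 then 1 else 0
  have hblock (a b : Fin n) :
      (of fun i j => vecMulVec ω (star ω) (i, a) (j, b)) = single a b 1 := by
    ext i j
    simp only [ω, of_apply, vecMulVec_apply, single_apply, Pi.star_apply]
    split_ifs <;> simp_all
  simpa only [choiMatrix, hblock] using h n _ (posSemidef_vecMulVec_self_star ω)

theorem IsCompletelyPositive.exists_eq_sum_adL {Φ : Mat n →ₗ[ℂ] Mat n}
    (h : IsCompletelyPositive n Φ) : ∃ w : Fin n × Fin n → Mat n, Φ = ∑ r, adL (w r) := by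
  obtain ⟨B, hB⟩ := h.posSemidef_choiMatrix.exists_eq_mul_conjTranspose
  refine ⟨fun r => of fun i j => B (i, j) r, choiMatrix_injective ?_⟩
  rw [choiMatrix_sum_adL, hB]
  rfl

end

theorem ucp_eq_opConvexComb_of_automorphisms (n : ℕ) :
    {Φ : Mat n →ₗ[ℂ] Mat n | IsUCP n Φ} =
    {Φ : Mat n →ₗ[ℂ] Mat n | ∃ (m : ℕ) (a u : Fin m → Mat n), IsFOP a ∧
      (∀ i, u i * star (u i) = 1 ∧ star (u i) * u i = 1) ∧
      ∀ x : Mat n, Φ x = ∑ i, a i * (u i * x * star (u i)) * star (a i)} := by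
  ext Φ
  constructor
  · rintro ⟨hunital, hcp⟩
    obtain ⟨w, rfl⟩ := hcp.exists_eq_sum_adL
    obtain ⟨m, a, ha, hsum⟩ := exists_fin_ne_zero_sum_comp_eq w adL adL_zero
    rw [← hsum] at hunital ⊢
    refine ⟨m, a, fun _ => 1, ⟨ha, by simpa [adL_apply] using hunital⟩, fun _ => by simp, ?_⟩
    simp [adL_apply]
  · rintro ⟨m, a, u, ⟨-, hpartition⟩, hunitary, hΦ⟩
    have hkraus : Φ = ∑ i, adL (a i * u i) :=
      LinearMap.ext fun x => by simp [hΦ, adL_apply, star_mul, mul_assoc]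
    refine ⟨?_, hkraus ▸ isCompletelyPositive_sum_adL _⟩
    simpa [hΦ, (hunitary _).1] using hpartition
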